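/- arXiv:1508.00570 — 3 statements merged into one kernel-verified Lean document; each statement's English description precedes it below -/
import Mathlib

section
/- For non-negative integers p, q with r = p + q, and any non-negative integer k, the sum over l from 0 to k of binom(k,l) · [(l+p)!·(k-l+q)!]^{1+α} / ((l+p+1)²·(k-l+q+1)²) is at most (4π²/3) · [(k+r)!]^{1+α} / (k+r+1)², for any real α ≥ 0. -/
open Finset Real

private lemma choose_shift_le (k l p : ℕ) : k.choose l ≤ (k + p).choose (l + p) := by
  induction p with
  | zero => simp
  | succ p ih =>
    calc k.choose l ≤ (k + p).choose (l + p) := ih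
      _ ≤ (k + p + 1).choose (l + p + 1) := by
          rw [Nat.choose_succ_succ]; omega

private lemma nat_bound (p q k l : ℕ) (hl : l ≤ k) :
    k.choose l * ((l + p).factorial * (k - l + q).factorial) ≤ (k + (p + q)).factorial := by
  have h1 : l + p ≤ k + (p + q) := by omega
  have h2 : k + (p + q) - (l + p) = k - l + q := by omega
  have h3 := Nat.choose_mul_factorial_mul_factorial h1
  rw [h2] at h3
  calc k.choose l * ((l + p).factorial * (k - l + q).factorial)
      ≤ (k + (p + q)).choose (l + p) * ((l + p).factorial * (k - l + q).factorial) := by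
        apply Nat.mul_le_mul_right
        calc k.choose l ≤ (k + p).choose (l + p) := choose_shift_le k l p
          _ ≤ (k + (p + q)).choose (l + p) := Nat.choose_le_choose _ (by omega)
    _ = (k + (p + q)).factorial := by rw [← h3]; ring

private lemma basel0 (n : ℕ) :
    ∑ l ∈ Finset.range n, (1 : ℝ) / ((l : ℝ) + 1) ^ 2 ≤ 2 - 2 / ((n : ℝ) + 1) := by
  induction n with
  | zero => norm_num
  | succ n ih =>
    rw [Finset.sum_range_succ]
    have h1 : (0 : ℝ) < (n : ℝ) + 1 := by positivity
    have h2 : (0 : ℝ) < (n : ℝ) + 2 := by positivity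
    have key : (1 : ℝ) / ((n : ℝ) + 1) ^ 2 ≤ 2 / ((n : ℝ) + 1) - 2 / ((n : ℝ) + 2) := by
      rw [div_sub_div _ _ (ne_of_gt h1) (ne_of_gt h2), div_le_div_iff₀ (by positivity) (by positivity)]
      nlinarith
    push_cast
    have : ((n : ℝ) + 1 + 1) = (n : ℝ) + 2 := by ring
    rw [this]
    linarith

private lemma shifted_basel (m n : ℕ) :
    ∑ l ∈ Finset.range n, (1 : ℝ) / (((l + m + 1 : ℕ) : ℝ)) ^ 2 ≤ 2 := by
  have h1 : ∑ l ∈ Finset.range n, (1 : ℝ) / (((l + m + 1 : ℕ) : ℝ)) ^ 2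
      ≤ ∑ l ∈ Finset.range n, (1 : ℝ) / ((l : ℝ) + 1) ^ 2 := by
    apply Finset.sum_le_sum
    intro l _
    apply div_le_div_of_nonneg_left (by norm_num) (by positivity)
    push_cast
    nlinarith [Nat.cast_nonneg (α := ℝ) m, Nat.cast_nonneg (α := ℝ) l]
  have h2 := basel0 n
  have h3 : (0 : ℝ) < (n : ℝ) + 1 := by positivity
  have : (0 : ℝ) ≤ 2 / ((n : ℝ) + 1) := by positivity
  linarith

theorem stmt_0 (α : ℝ) (hα : 0 ≤ α) (p q r k : ℕ) (hr : r = p + q) :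
    ∑ l ∈ Finset.range (k + 1),
      (k.choose l : ℝ) * (((l + p).factorial * (k - l + q).factorial : ℕ) : ℝ) ^ (1 + α) /
        (((l + p + 1 : ℕ) : ℝ) ^ 2 * ((k - l + q + 1 : ℕ) : ℝ) ^ 2) ≤
    (4 * Real.pi ^ 2 / 3) * (((k + r).factorial : ℝ) ^ (1 + α)) / ((k + r + 1 : ℕ) : ℝ) ^ 2 := by
  subst hr
  set M : ℝ := ((k + (p + q)).factorial : ℝ) ^ (1 + α) with hMdef
  have hM : 0 ≤ M := by positivity
  set n : ℝ := ((k + (p + q) + 1 : ℕ) : ℝ) with hndef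
  have hn0 : (0 : ℝ) < n := by
    rw [hndef]; exact_mod_cast Nat.succ_pos _
  have hπ : (8 : ℝ) ≤ 4 * Real.pi ^ 2 / 3 := by
    nlinarith [Real.pi_gt_three]
  have key : ∀ l ∈ Finset.range (k + 1),
      (k.choose l : ℝ) * (((l + p).factorial * (k - l + q).factorial : ℕ) : ℝ) ^ (1 + α) /
        (((l + p + 1 : ℕ) : ℝ) ^ 2 * ((k - l + q + 1 : ℕ) : ℝ) ^ 2)
      ≤ M * (2 / n ^ 2) *
        (1 / ((l + p + 1 : ℕ) : ℝ) ^ 2 + 1 / ((k - l + q + 1 : ℕ) : ℝ) ^ 2) := by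
    intro l hl
    rw [Finset.mem_range, Nat.lt_succ_iff] at hl
    set a : ℝ := ((l + p + 1 : ℕ) : ℝ) with hadef
    set b : ℝ := ((k - l + q + 1 : ℕ) : ℝ) with hbdef
    have ha : (1 : ℝ) ≤ a := by rw [hadef]; exact_mod_cast Nat.succ_le_succ (Nat.zero_le _)
    have hb : (1 : ℝ) ≤ b := by rw [hbdef]; exact_mod_cast Nat.succ_le_succ (Nat.zero_le _)
    have ha0 : (0 : ℝ) < a := lt_of_lt_of_le one_pos ha
    have hb0 : (0 : ℝ) < b := lt_of_lt_of_le one_pos hb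
    have hab : n ≤ a + b := by
      rw [hndef, hadef, hbdef]
      have : k + (p + q) + 1 ≤ (l + p + 1) + (k - l + q + 1) := by omega
      exact_mod_cast this
    have hC : (1 : ℝ) ≤ (k.choose l : ℝ) := by
      exact_mod_cast Nat.one_le_iff_ne_zero.mpr (Nat.choose_pos hl).ne'
    have hF : (0 : ℝ) ≤ (((l + p).factorial * (k - l + q).factorial : ℕ) : ℝ) :=
      Nat.cast_nonneg _
    have h1 : (k.choose l : ℝ) *
        (((l + p).factorial * (k - l + q).factorial : ℕ) : ℝ) ^ (1 + α) ≤ M := by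
      have e1 : (k.choose l : ℝ) ≤ (k.choose l : ℝ) ^ (1 + α) := by
        nth_rewrite 1 [← Real.rpow_one (k.choose l : ℝ)]
        exact Real.rpow_le_rpow_of_exponent_le hC (by linarith)
      calc (k.choose l : ℝ) *
            (((l + p).factorial * (k - l + q).factorial : ℕ) : ℝ) ^ (1 + α)
          ≤ (k.choose l : ℝ) ^ (1 + α) *
            (((l + p).factorial * (k - l + q).factorial : ℕ) : ℝ) ^ (1 + α) := by
            exact mul_le_mul_of_nonneg_right e1 (Real.rpow_nonneg hF _)
        _ = ((k.choose l : ℝ) *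
            (((l + p).factorial * (k - l + q).factorial : ℕ) : ℝ)) ^ (1 + α) :=
            (Real.mul_rpow (le_trans zero_le_one hC) hF).symm
        _ ≤ M := by
            rw [hMdef]
            apply Real.rpow_le_rpow (by positivity) _ (by linarith)
            exact_mod_cast nat_bound p q k l hl
    have hsq : n ^ 2 ≤ 2 * (a ^ 2 + b ^ 2) := by
      nlinarith [sq_nonneg (a - b), sq_nonneg (a + b)]
    have e : 1 / (a ^ 2 * b ^ 2) ≤ (2 / n ^ 2) * (1 / a ^ 2 + 1 / b ^ 2) := by
      have heq : (2 / n ^ 2) * (1 / a ^ 2 + 1 / b ^ 2)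
          = 2 * (b ^ 2 + a ^ 2) / (n ^ 2 * (a ^ 2 * b ^ 2)) := by
        field_simp
      rw [heq, div_le_div_iff₀ (by positivity) (by positivity)]
      nlinarith [mul_pos (mul_pos ha0 ha0) (mul_pos hb0 hb0), sq_nonneg a, sq_nonneg b,
        mul_nonneg (mul_nonneg ha0.le ha0.le) (mul_nonneg hb0.le hb0.le)]
    calc (k.choose l : ℝ) *
          (((l + p).factorial * (k - l + q).factorial : ℕ) : ℝ) ^ (1 + α) / (a ^ 2 * b ^ 2)
        ≤ M / (a ^ 2 * b ^ 2) := by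
          apply div_le_div_of_nonneg_right h1 (by positivity) |>.trans_eq rfl
      _ = M * (1 / (a ^ 2 * b ^ 2)) := by ring
      _ ≤ M * ((2 / n ^ 2) * (1 / a ^ 2 + 1 / b ^ 2)) := mul_le_mul_of_nonneg_left e hM
      _ = M * (2 / n ^ 2) * (1 / a ^ 2 + 1 / b ^ 2) := by ring
  have hS1 : ∑ l ∈ Finset.range (k + 1), (1 : ℝ) / ((l + p + 1 : ℕ) : ℝ) ^ 2 ≤ 2 :=
    shifted_basel p (k + 1)
  have hS2 : ∑ l ∈ Finset.range (k + 1), (1 : ℝ) / ((k - l + q + 1 : ℕ) : ℝ) ^ 2 ≤ 2 := by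
    have hrefl := Finset.sum_range_reflect
      (fun j => (1 : ℝ) / ((j + q + 1 : ℕ) : ℝ) ^ 2) (k + 1)
    simp only [Nat.add_sub_cancel] at hrefl
    rw [show (∑ l ∈ Finset.range (k + 1), (1 : ℝ) / ((k - l + q + 1 : ℕ) : ℝ) ^ 2)
      = ∑ l ∈ Finset.range (k + 1), (1 : ℝ) / ((l + q + 1 : ℕ) : ℝ) ^ 2 from hrefl]
    exact shifted_basel q (k + 1)
  calc ∑ l ∈ Finset.range (k + 1),
        (k.choose l : ℝ) * (((l + p).factorial * (k - l + q).factorial : ℕ) : ℝ) ^ (1 + α) /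
          (((l + p + 1 : ℕ) : ℝ) ^ 2 * ((k - l + q + 1 : ℕ) : ℝ) ^ 2)
      ≤ ∑ l ∈ Finset.range (k + 1), M * (2 / n ^ 2) *
          (1 / ((l + p + 1 : ℕ) : ℝ) ^ 2 + 1 / ((k - l + q + 1 : ℕ) : ℝ) ^ 2) :=
        Finset.sum_le_sum key
    _ = M * (2 / n ^ 2) *
        ((∑ l ∈ Finset.range (k + 1), (1 : ℝ) / ((l + p + 1 : ℕ) : ℝ) ^ 2) +
         (∑ l ∈ Finset.range (k + 1), (1 : ℝ) / ((k - l + q + 1 : ℕ) : ℝ) ^ 2)) := by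
        rw [← Finset.mul_sum, Finset.sum_add_distrib]
    _ ≤ M * (2 / n ^ 2) * (2 + 2) := by
        have hc : (0 : ℝ) ≤ M * (2 / n ^ 2) := by positivity
        apply mul_le_mul_of_nonneg_left _ hc
        linarith
    _ = 8 * M / n ^ 2 := by ring
    _ ≤ (4 * Real.pi ^ 2 / 3) * M / n ^ 2 := by
        apply div_le_div_of_nonneg_right _ (by positivity) |>.trans_eq rfl
        exact mul_le_mul_of_nonneg_right hπ hM
end

section
/- Let A, B : [0,1] → B(H) be smooth paths of bounded operators on a finite-dimensional Hilbert space such that for all k ≥ 0, ‖A^{(k)}(s)‖ ≤ C·d^k·[(k+p)!]^{1+α}/(k+p+1)² and ‖B^{(k)}(s)‖ ≤ E·f^k·[(k+q)!]^{1+α}/(k+q+1)². Then for all k ≥ 0, ‖(AB)^{(k)}(s)‖ ≤ (4π²/3)·C·E·g^k·[(k+r)!]^{1+α}/(k+r+1)², where g = max(d,f) and r = p+q. -/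
open Real

lemma sum_inv_sq_le (n : ℕ) : ∑ l ∈ Finset.range n, (1:ℝ) / ((l:ℝ) + 1)^2 ≤ 2 := by
  have h : ∀ n : ℕ, ∑ l ∈ Finset.range (n+1), (1:ℝ) / ((l:ℝ) + 1)^2 ≤ 2 - 1/((n:ℝ)+1) := by
    intro n
    induction n with
    | zero => norm_num
    | succ m ih =>
      rw [Finset.sum_range_succ]
      have key : (1:ℝ) / ((m:ℝ)+1+1)^2 ≤ 1/((m:ℝ)+1) - 1/((m:ℝ)+1+1) := by
        rw [div_sub_div _ _ (by positivity) (by positivity),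
          div_le_div_iff₀ (by positivity) (by positivity)]
        nlinarith
      push_cast
      linarith
  cases n with
  | zero => simp
  | succ m =>
    have h1 : (0:ℝ) ≤ 1/((m:ℝ)+1) := by positivity
    linarith [h m]

lemma sum_inv_sq_off_le (n p : ℕ) :
    ∑ l ∈ Finset.range n, (1:ℝ) / (((l+p+1:ℕ)):ℝ)^2 ≤ 2 := by
  refine le_trans (Finset.sum_le_sum fun l _ => ?_) (sum_inv_sq_le n)
  have h : ((l:ℝ)+1)^2 ≤ (((l+p+1:ℕ)):ℝ)^2 := by
    push_cast
    nlinarith [Nat.cast_nonneg (α := ℝ) p, Nat.cast_nonneg (α := ℝ) l]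
  exact one_div_le_one_div_of_le (by positivity) h

lemma term_le (a b S : ℝ) (ha : 0 < a) (hb : 0 < b) (hS : a + b = S) :
    1/(a^2*b^2) ≤ 2/S^2 * (1/a^2 + 1/b^2) := by
  have hS0 : 0 < S := by linarith
  have heq : 2/S^2 * (1/a^2 + 1/b^2) = 2*(a^2+b^2)/(S^2*(a^2*b^2)) := by
    field_simp; ring
  rw [heq, div_le_div_iff₀ (by positivity) (by positivity)]
  subst hS
  have h2 : (a+b)^2 ≤ 2*(a^2+b^2) := by nlinarith [sq_nonneg (a-b)]
  have h3 := mul_le_mul_of_nonneg_right h2 (by positivity : (0:ℝ) ≤ a^2*b^2)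
  nlinarith [h3]

lemma double_sum_le (k p q : ℕ) :
    ∑ l ∈ Finset.range (k+1),
      (1:ℝ) / ((((l+p+1:ℕ)):ℝ)^2 * (((k-l+q+1:ℕ)):ℝ)^2) ≤ 8 / (((k+p+q+1:ℕ)):ℝ)^2 := by
  have hS : (0:ℝ) < (((k+p+q+2:ℕ)):ℝ) := by positivity
  calc ∑ l ∈ Finset.range (k+1),
      (1:ℝ) / ((((l+p+1:ℕ)):ℝ)^2 * (((k-l+q+1:ℕ)):ℝ)^2)
      ≤ ∑ l ∈ Finset.range (k+1), 2/(((k+p+q+2:ℕ)):ℝ)^2 *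
          (1/(((l+p+1:ℕ)):ℝ)^2 + 1/(((k-l+q+1:ℕ)):ℝ)^2) := by
        refine Finset.sum_le_sum fun l hl => ?_
        have hlk : l ≤ k := by simpa using Nat.lt_succ_iff.mp (Finset.mem_range.mp hl)
        refine term_le _ _ _ (by positivity) (by positivity) ?_
        have : (l+p+1) + (k-l+q+1) = k+p+q+2 := by omega
        exact_mod_cast congrArg (Nat.cast (R := ℝ)) this
    _ = 2/(((k+p+q+2:ℕ)):ℝ)^2 *
          ((∑ l ∈ Finset.range (k+1), 1/(((l+p+1:ℕ)):ℝ)^2) +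
           (∑ l ∈ Finset.range (k+1), 1/(((k-l+q+1:ℕ)):ℝ)^2)) := by
        rw [← Finset.mul_sum, Finset.sum_add_distrib]
    _ ≤ 2/(((k+p+q+2:ℕ)):ℝ)^2 * (2 + 2) := by
        have h1 := sum_inv_sq_off_le (k+1) p
        have h2 : ∑ l ∈ Finset.range (k+1), (1:ℝ)/(((k-l+q+1:ℕ)):ℝ)^2 ≤ 2 := by
          have hr := Finset.sum_range_reflect (fun j => (1:ℝ)/(((j+q+1:ℕ)):ℝ)^2) (k+1)
          simp only [Nat.add_sub_cancel] at hr
          calc ∑ l ∈ Finset.range (k+1), (1:ℝ)/(((k-l+q+1:ℕ)):ℝ)^2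
              = ∑ l ∈ Finset.range (k+1), (1:ℝ)/(((l+q+1:ℕ)):ℝ)^2 := hr
            _ ≤ 2 := sum_inv_sq_off_le (k+1) q
        gcongr
    _ ≤ 8 / (((k+p+q+1:ℕ)):ℝ)^2 := by
        rw [div_mul_eq_mul_div, div_le_div_iff₀ (by positivity) (by positivity)]
        push_cast
        nlinarith [Nat.cast_nonneg (α := ℝ) k, Nat.cast_nonneg (α := ℝ) p, Nat.cast_nonneg (α := ℝ) q]
lemma rpow_combine (c m M α : ℝ) (hc : 1 ≤ c) (hm : 0 ≤ m) (h : c*m ≤ M) (hα : 0 ≤ α) :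
    c * m ^ (1+α) ≤ M ^ (1+α) := by
  have h1 : c ≤ c ^ (1+α) := by
    nth_rewrite 1 [← Real.rpow_one c]
    exact Real.rpow_le_rpow_of_exponent_le hc (by linarith)
  calc c * m^(1+α) ≤ c^(1+α) * m^(1+α) :=
        mul_le_mul_of_nonneg_right h1 (Real.rpow_nonneg hm _)
    _ = (c*m)^(1+α) := (Real.mul_rpow (by linarith) hm).symm
    _ ≤ M^(1+α) := Real.rpow_le_rpow (by positivity) h (by linarith)

lemma aux_choose_le_choose_add (k l p : ℕ) : k.choose l ≤ (k+p).choose (l+p) := by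
  induction p with
  | zero => simp
  | succ m ih =>
    calc k.choose l ≤ (k+m).choose (l+m) := ih
    _ ≤ (k+m+1).choose (l+m+1) := by
        rw [Nat.choose_succ_succ]; omega

lemma aux_choose_fact_le (k l p q : ℕ) (hl : l ≤ k) :
    k.choose l * ((l+p).factorial * (k-l+q).factorial) ≤ (k+p+q).factorial := by
  have hle : l + p ≤ k + p + q := by omega
  have hid := Nat.choose_mul_factorial_mul_factorial hle
  have hsub : k + p + q - (l + p) = k - l + q := by omega
  rw [hsub] at hid
  calc k.choose l * ((l+p).factorial * (k-l+q).factorial)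
      ≤ (k+p+q).choose (l+p) * ((l+p).factorial * (k-l+q).factorial) := by
        have h1 : k.choose l ≤ (k+p).choose (l+p) := aux_choose_le_choose_add k l p
        have h2 : (k+p).choose (l+p) ≤ (k+p+q).choose (l+p) :=
          Nat.choose_le_choose _ (by omega)
        exact Nat.mul_le_mul_right _ (h1.trans h2)
    _ = (k+p+q).factorial := by rw [← hid]; ring

theorem stmt_3 {E : Type*} [NormedAddCommGroup E] [InnerProductSpace ℂ E]
    [FiniteDimensional ℂ E]
    (A B : ℝ → (E →L[ℂ] E)) (hA : ContDiff ℝ (⊤ : ℕ∞) A) (hB : ContDiff ℝ (⊤ : ℕ∞) B)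
    (C d Ef f α : ℝ) (hC : 0 ≤ C) (hd : 0 ≤ d) (hE : 0 ≤ Ef) (hf : 0 ≤ f) (hα : 0 ≤ α)
    (p q : ℕ)
    (hAk : ∀ (k : ℕ) (s : ℝ), ‖iteratedDeriv k A s‖ ≤
      C * d ^ k * ((k + p).factorial : ℝ) ^ (1 + α) / ((k + p + 1 : ℕ) : ℝ) ^ 2)
    (hBk : ∀ (k : ℕ) (s : ℝ), ‖iteratedDeriv k B s‖ ≤
      Ef * f ^ k * ((k + q).factorial : ℝ) ^ (1 + α) / ((k + q + 1 : ℕ) : ℝ) ^ 2) :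
    ∀ (k : ℕ) (s : ℝ), ‖iteratedDeriv k (fun t => A t * B t) s‖ ≤
      (4 * Real.pi ^ 2 / 3) * C * Ef * (max d f) ^ k *
        ((k + (p + q)).factorial : ℝ) ^ (1 + α) / ((k + (p + q) + 1 : ℕ) : ℝ) ^ 2 := by
  intro k s
  have hmul := norm_iteratedFDeriv_mul_le (𝕜 := ℝ) hA hB s (WithTop.coe_le_coe.mpr (le_top : (k : ℕ∞) ≤ ⊤))
  simp only [norm_iteratedFDeriv_eq_norm_iteratedDeriv] at hmul
  set g := max d f with hg
  have hg0 : 0 ≤ g := le_trans hd (le_max_left _ _)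
  set M : ℝ := ((k + (p + q)).factorial : ℝ) ^ (1 + α) with hMdef
  have hM : (0:ℝ) ≤ M := Real.rpow_nonneg (by positivity) _
  refine le_trans hmul ?_
  have key : ∀ l ∈ Finset.range (k+1),
      (k.choose l : ℝ) * ‖iteratedDeriv l A s‖ * ‖iteratedDeriv (k-l) B s‖ ≤
        (C * Ef * g ^ k * M) *
          (1 / ((((l+p+1:ℕ)):ℝ)^2 * (((k-l+q+1:ℕ)):ℝ)^2)) := by
    intro l hl
    have hlk : l ≤ k := Nat.lt_succ_iff.mp (Finset.mem_range.mp hl)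
    have h1 := hAk l s
    have h2 := hBk (k-l) s
    calc (k.choose l : ℝ) * ‖iteratedDeriv l A s‖ * ‖iteratedDeriv (k-l) B s‖
        ≤ (k.choose l : ℝ) *
            (C * d ^ l * ((l + p).factorial : ℝ) ^ (1 + α) / ((l + p + 1 : ℕ) : ℝ) ^ 2) *
            (Ef * f ^ (k-l) * (((k-l) + q).factorial : ℝ) ^ (1 + α) /
              (((k-l) + q + 1 : ℕ) : ℝ) ^ 2) := by
          have hn1 : (0:ℝ) ≤ C * d ^ l * ((l + p).factorial : ℝ) ^ (1 + α) /
              ((l + p + 1 : ℕ) : ℝ) ^ 2 := by positivity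
          gcongr
    _ = (C * Ef) * (d ^ l * f ^ (k-l)) *
          ((k.choose l : ℝ) * (((l + p).factorial : ℝ) ^ (1 + α) *
            (((k-l) + q).factorial : ℝ) ^ (1 + α))) *
          (1 / ((((l+p+1:ℕ)):ℝ)^2 * (((k-l+q+1:ℕ)):ℝ)^2)) := by
        ring
    _ ≤ (C * Ef) * g ^ k *
          ((k.choose l : ℝ) * (((l + p).factorial : ℝ) ^ (1 + α) *
            (((k-l) + q).factorial : ℝ) ^ (1 + α))) *
          (1 / ((((l+p+1:ℕ)):ℝ)^2 * (((k-l+q+1:ℕ)):ℝ)^2)) := by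
        have hdf : d ^ l * f ^ (k-l) ≤ g ^ k := by
          calc d ^ l * f ^ (k-l) ≤ g ^ l * g ^ (k-l) := by
                exact mul_le_mul (pow_le_pow_left₀ hd (le_max_left d f) l)
                  (pow_le_pow_left₀ hf (le_max_right d f) (k-l))
                  (by positivity) (by positivity)
            _ = g ^ k := by rw [← pow_add, Nat.add_sub_cancel' hlk]
        gcongr
    _ ≤ (C * Ef) * g ^ k * M *
          (1 / ((((l+p+1:ℕ)):ℝ)^2 * (((k-l+q+1:ℕ)):ℝ)^2)) := by
        have hcomb : (k.choose l : ℝ) * (((l + p).factorial : ℝ) ^ (1 + α) *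
            (((k-l) + q).factorial : ℝ) ^ (1 + α)) ≤ M := by
          have hcast : (((l + p).factorial : ℝ) * (((k-l) + q).factorial : ℝ)) ^ (1 + α)
              = ((l + p).factorial : ℝ) ^ (1 + α) * (((k-l) + q).factorial : ℝ) ^ (1 + α) :=
            Real.mul_rpow (by positivity) (by positivity)
          rw [← hcast]
          refine rpow_combine _ _ _ α ?_ (by positivity) ?_ hα
          · exact_mod_cast Nat.one_le_iff_ne_zero.mpr (Nat.choose_pos hlk).ne'
          · have := aux_choose_fact_le k l p q hlk
            calc (k.choose l : ℝ) * (((l + p).factorial : ℝ) * (((k-l) + q).factorial : ℝ))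
                = ((k.choose l * ((l+p).factorial * (k-l+q).factorial) : ℕ) : ℝ) := by
                  push_cast; ring
              _ ≤ (((k+p+q).factorial : ℕ) : ℝ) := by exact_mod_cast this
              _ = ((k + (p + q)).factorial : ℝ) := by rw [← Nat.add_assoc]
        gcongr
    _ = (C * Ef * g ^ k * M) *
          (1 / ((((l+p+1:ℕ)):ℝ)^2 * (((k-l+q+1:ℕ)):ℝ)^2)) := by ring
  calc ∑ l ∈ Finset.range (k+1),
        (k.choose l : ℝ) * ‖iteratedDeriv l A s‖ * ‖iteratedDeriv (k-l) B s‖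
      ≤ ∑ l ∈ Finset.range (k+1), (C * Ef * g ^ k * M) *
          (1 / ((((l+p+1:ℕ)):ℝ)^2 * (((k-l+q+1:ℕ)):ℝ)^2)) := Finset.sum_le_sum key
    _ = (C * Ef * g ^ k * M) * ∑ l ∈ Finset.range (k+1),
          (1:ℝ) / ((((l+p+1:ℕ)):ℝ)^2 * (((k-l+q+1:ℕ)):ℝ)^2) := by
        rw [Finset.mul_sum]
    _ ≤ (C * Ef * g ^ k * M) * (8 / (((k+p+q+1:ℕ)):ℝ)^2) := by
        gcongr
        exact double_sum_le k p q
    _ ≤ 4 * Real.pi ^ 2 / 3 * C * Ef * g ^ k * M / ((k + (p + q) + 1 : ℕ) : ℝ) ^ 2 := by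
        have h8 : (8:ℝ) ≤ 4 * Real.pi ^ 2 / 3 := by nlinarith [Real.pi_gt_three]
        have hidx : ((k + (p + q) + 1 : ℕ) : ℝ) = (((k+p+q+1:ℕ)):ℝ) := by norm_num; ring
        rw [hidx]
        have hpos : (0:ℝ) < (((k+p+q+1:ℕ)):ℝ)^2 := by positivity
        calc (C * Ef * g ^ k * M) * (8 / (((k+p+q+1:ℕ)):ℝ)^2)
            = 8 * ((C * Ef * g ^ k * M) / (((k+p+q+1:ℕ)):ℝ)^2) := by ring
          _ ≤ (4 * Real.pi ^ 2 / 3) * ((C * Ef * g ^ k * M) / (((k+p+q+1:ℕ)):ℝ)^2) := by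
              gcongr
          _ = 4 * Real.pi ^ 2 / 3 * C * Ef * g ^ k * M / (((k+p+q+1:ℕ)):ℝ)^2 := by ring
end

section
/- For a finite subset Γ of an index set, let H_Γ = ∑_{λ ∈ Γ} h_λ, where the h_λ are not assumed to commute with each other. Suppose P is an operator and Ω, Θ are disjoint subsets of the index set such that every h_λ with λ ∈ Ω commutes with P and with every h_{λ'} for λ' ∈ Θ. Define f(Γ) = e^{β H_Γ} P e^{-2β H_Γ} P e^{β H_Γ} for Γ a finite subset, and f̌(Γ) = ∑_{Γ' ⊆ Γ} (-1)^{|Γ\Γ'|} f(Γ'). If Ω is nonempty, then f̌(Ω ∪ Θ) = 0. -/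
open Finset NormedSpace

lemma aux_comm {M : Type*} [Monoid M] {X Y U V P : M}
    (hXP : Commute X P) (hXU : Commute X U) (hXV : Commute X V)
    (h1 : X * Y * X = 1) :
    X * U * P * (Y * V) * P * (X * U) = U * P * V * P * U := by
  have h1' : ∀ c, X * (Y * (X * c)) = c := fun c => by
    rw [← mul_assoc, ← mul_assoc, h1, one_mul]
  simp only [mul_assoc]
  rw [← hXP.left_comm, ← hXV.left_comm, hXU.left_comm, hXP.left_comm, h1']

set_option maxHeartbeats 1000000 in
theorem stmt_6 {E : Type*} [NormedAddCommGroup E] [InnerProductSpace ℂ E]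
    [FiniteDimensional ℂ E] [CompleteSpace E]
    {Λ : Type*} [DecidableEq Λ]
    (h : Λ → (E →L[ℂ] E)) (P : E →L[ℂ] E) (β : ℝ)
    (Ω Θ : Finset Λ) (hdisj : Disjoint Ω Θ) (hne : Ω.Nonempty)
    (hcommP : ∀ l ∈ Ω, Commute (h l) P)
    (hcommh : ∀ l ∈ Ω, ∀ l' ∈ Θ, Commute (h l) (h l')) :
    ∑ Γ' ∈ (Ω ∪ Θ).powerset, ((-1 : ℤ) ^ (((Ω ∪ Θ) \ Γ').card)) •
      (NormedSpace.exp ((β : ℂ) • ∑ l ∈ Γ', h l) * P *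
        NormedSpace.exp ((-2 * β : ℂ) • ∑ l ∈ Γ', h l) * P *
        NormedSpace.exp ((β : ℂ) • ∑ l ∈ Γ', h l)) = 0 := by
  classical
  set f : Finset Λ → (E →L[ℂ] E) := fun Γ =>
    NormedSpace.exp ((β : ℂ) • ∑ l ∈ Γ, h l) * P *
      NormedSpace.exp ((-2 * β : ℂ) • ∑ l ∈ Γ, h l) * P *
      NormedSpace.exp ((β : ℂ) • ∑ l ∈ Γ, h l) with hf
  -- the key analytic fact: for S ⊆ Ω, T ⊆ Θ, f (S ∪ T) = f T
  have key : ∀ S ∈ Ω.powerset, ∀ T ∈ Θ.powerset, f (S ∪ T) = f T := by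
    intro S hS T hT
    rw [mem_powerset] at hS hT
    let +nondep : NormedAlgebra ℚ (E →L[ℂ] E) := .restrictScalars ℚ ℂ (E →L[ℂ] E)
    set A : E →L[ℂ] E := ∑ l ∈ S, h l with hA
    set B : E →L[ℂ] E := ∑ l ∈ T, h l with hB
    have hAB : Commute A B :=
      Commute.sum_left _ _ _ fun l hl =>
        Commute.sum_right _ _ _ fun l' hl' => hcommh l (hS hl) l' (hT hl')
    have hAP : Commute A P := Commute.sum_left _ _ _ fun l hl => hcommP l (hS hl)
    have hST : Disjoint S T := hdisj.mono hS hT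
    have hsum : (∑ l ∈ S ∪ T, h l) = A + B := Finset.sum_union hST
    have hfac : ∀ c : ℂ, NormedSpace.exp (c • (A + B)) =
        NormedSpace.exp (c • A) * NormedSpace.exp (c • B) := by
      intro c
      rw [smul_add]
      exact exp_add_of_commute ((hAB.smul_left c).smul_right c)
    set X := NormedSpace.exp ((β : ℂ) • A)
    set Y := NormedSpace.exp ((-2 * β : ℂ) • A)
    set U := NormedSpace.exp ((β : ℂ) • B)
    set V := NormedSpace.exp ((-2 * β : ℂ) • B)
    have hXP : Commute X P := (hAP.smul_left _).exp_left
    have hXU : Commute X U := Commute.exp ((hAB.smul_left _).smul_right _)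
    have hXV : Commute X V := Commute.exp ((hAB.smul_left _).smul_right _)
    have hc : ∀ c d : ℂ, NormedSpace.exp (c • A) * NormedSpace.exp (d • A)
        = NormedSpace.exp ((c + d) • A) := fun c d => by
      rw [add_smul]
      exact (exp_add_of_commute (((Commute.refl A).smul_left _).smul_right _)).symm
    have h1 : X * Y * X = 1 := by
      rw [hc, hc, show ((β : ℂ) + -2 * β + β) = 0 by ring, zero_smul, exp_zero]
    simp only [hf, hsum, hfac]
    exact aux_comm hXP hXU hXV h1
  -- re-index the sum over a product of powersets
  have step1 : (∑ Γ' ∈ (Ω ∪ Θ).powerset, ((-1 : ℤ) ^ (((Ω ∪ Θ) \ Γ').card)) • f Γ')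
      = ∑ p ∈ Ω.powerset ×ˢ Θ.powerset,
          ((-1 : ℤ) ^ (((Ω ∪ Θ) \ (p.1 ∪ p.2)).card)) • f (p.1 ∪ p.2) := by
    refine Finset.sum_bij' (fun Γ' _ => (Γ' ∩ Ω, Γ' ∩ Θ)) (fun p _ => p.1 ∪ p.2)
      ?_ ?_ ?_ ?_ ?_
    · intro Γ' hΓ'
      simp [Finset.mem_product, inter_subset_right]
    · intro p hp
      rw [Finset.mem_product] at hp
      rw [mem_powerset]
      exact Finset.union_subset_union (mem_powerset.mp hp.1) (mem_powerset.mp hp.2)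
    · intro Γ' hΓ'
      rw [mem_powerset] at hΓ'
      simp only
      rw [← Finset.inter_union_distrib_left, Finset.inter_eq_left.mpr hΓ']
    · intro p hp
      rw [Finset.mem_product] at hp
      have h1 := mem_powerset.mp hp.1
      have h2 := mem_powerset.mp hp.2
      have e1 : (p.1 ∪ p.2) ∩ Ω = p.1 := by
        ext a
        simp only [Finset.mem_inter, Finset.mem_union]
        constructor
        · rintro ⟨ha | ha, haΩ⟩
          · exact ha
          · exact absurd (h2 ha) (Finset.disjoint_left.mp hdisj haΩ)
        · intro ha
          exact ⟨Or.inl ha, h1 ha⟩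
      have e2 : (p.1 ∪ p.2) ∩ Θ = p.2 := by
        ext a
        simp only [Finset.mem_inter, Finset.mem_union]
        constructor
        · rintro ⟨ha | ha, haΘ⟩
          · exact absurd haΘ (Finset.disjoint_left.mp hdisj (h1 ha))
          · exact ha
        · intro ha
          exact ⟨Or.inr ha, h2 ha⟩
      simp only [e1, e2]
    · intro Γ' hΓ'
      rw [mem_powerset] at hΓ'
      have e : Γ' ∩ Ω ∪ Γ' ∩ Θ = Γ' := by
        rw [← Finset.inter_union_distrib_left, Finset.inter_eq_left.mpr hΓ']
      simp only [e]
  -- the alternating sum over subsets of Ω vanishes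
  have hS0 : ∑ S ∈ Ω.powerset, ((-1 : ℤ) ^ ((Ω \ S).card)) = 0 := by
    have hco : ∀ S ∈ Ω.powerset,
        ((-1 : ℤ) ^ ((Ω \ S).card)) = (-1) ^ Ω.card * (-1) ^ S.card := by
      intro S hS
      rw [mem_powerset] at hS
      have hk : S.card ≤ Ω.card := card_le_card hS
      rw [Finset.card_sdiff_of_subset hS]
      have hb : ((-1 : ℤ) ^ S.card) * ((-1 : ℤ) ^ S.card) = 1 := by
        rw [← pow_add]
        exact Even.neg_one_pow ⟨S.card, rfl⟩
      calc ((-1 : ℤ) ^ (Ω.card - S.card))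
          = ((-1 : ℤ) ^ (Ω.card - S.card)) * (((-1 : ℤ) ^ S.card) * ((-1 : ℤ) ^ S.card)) := by
            rw [hb, mul_one]
        _ = (((-1 : ℤ) ^ (Ω.card - S.card)) * ((-1 : ℤ) ^ S.card)) * ((-1 : ℤ) ^ S.card) := by
            ring
        _ = (-1) ^ Ω.card * (-1) ^ S.card := by
            rw [← pow_add, Nat.sub_add_cancel hk]
    rw [Finset.sum_congr rfl hco, ← Finset.mul_sum,
      Finset.sum_powerset_neg_one_pow_card_of_nonempty hne, mul_zero]
  -- put it together
  rw [show (∑ Γ' ∈ (Ω ∪ Θ).powerset, ((-1 : ℤ) ^ (((Ω ∪ Θ) \ Γ').card)) •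
      (NormedSpace.exp ((β : ℂ) • ∑ l ∈ Γ', h l) * P *
        NormedSpace.exp ((-2 * β : ℂ) • ∑ l ∈ Γ', h l) * P *
        NormedSpace.exp ((β : ℂ) • ∑ l ∈ Γ', h l)))
      = ∑ Γ' ∈ (Ω ∪ Θ).powerset, ((-1 : ℤ) ^ (((Ω ∪ Θ) \ Γ').card)) • f Γ' from rfl,
    step1, Finset.sum_product]
  have hterm : ∀ S ∈ Ω.powerset,
      (∑ T ∈ Θ.powerset, ((-1 : ℤ) ^ (((Ω ∪ Θ) \ (S ∪ T)).card)) • f (S ∪ T))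
      = ((-1 : ℤ) ^ ((Ω \ S).card)) •
          (∑ T ∈ Θ.powerset, ((-1 : ℤ) ^ ((Θ \ T).card)) • f T) := by
    intro S hS
    rw [Finset.smul_sum]
    refine Finset.sum_congr rfl fun T hT => ?_
    have hSΩ := mem_powerset.mp hS
    have hTΘ := mem_powerset.mp hT
    have hset : (Ω ∪ Θ) \ (S ∪ T) = (Ω \ S) ∪ (Θ \ T) := by
      ext a
      simp only [Finset.mem_sdiff, Finset.mem_union, not_or]
      constructor
      · rintro ⟨ha | ha, hs, ht⟩
        · exact Or.inl ⟨ha, hs⟩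
        · exact Or.inr ⟨ha, ht⟩
      · rintro (⟨ha, hs⟩ | ⟨ha, ht⟩)
        · exact ⟨Or.inl ha, hs, fun hT' => Finset.disjoint_left.mp hdisj ha (hTΘ hT')⟩
        · exact ⟨Or.inr ha, fun hS' => Finset.disjoint_left.mp hdisj (hSΩ hS') ha, ht⟩
    have hdd : Disjoint (Ω \ S) (Θ \ T) :=
      hdisj.mono (Finset.sdiff_subset) (Finset.sdiff_subset)
    rw [hset, Finset.card_union_of_disjoint hdd, pow_add, mul_smul,
      key S hS T hT]
  rw [Finset.sum_congr rfl hterm, ← Finset.sum_smul, hS0, zero_smul]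
end
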